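/- Let (A, b, c) ≥ 0 be a covering program with variables in [0,1]^n, and suppose its slack measure satisfies s := s(A,b,c) > 0, attained at a feasible point x_S. If (ΔA, Δb) is any perturbation such that the perturbed covering system (A + ΔA)x ≥ b + Δb, 0 ≤ x ≤ 1 − Δb' (with all constraints, including the box constraints, perturbed by at most the stated amounts) is infeasible, then for some constraint row i either ‖ΔA_{i·}‖₂ > s n^{-1/2}/2 or the corresponding right-hand-side perturbation exceeds s/2 in absolute value; consequently the primal condition number satisfies δ_P ≥ ‖d‖^{-1} n^{-1/2} s(A,b,c)/2. -/

import Mathlib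

open Matrix Finset MeasureTheory ProbabilityTheory

/-- Euclidean norm of a finitely-indexed real vector. -/
noncomputable def l2norm {ι : Type*} [Fintype ι] (x : ι → ℝ) : ℝ :=
  Real.sqrt (∑ i, (x i) ^ 2)

/-- Frobenius norm of a real matrix. -/
noncomputable def frobNorm {ι κ : Type*} [Fintype ι] [Fintype κ] (A : Matrix ι κ ℝ) : ℝ :=
  Real.sqrt (∑ i, ∑ j, (A i j) ^ 2)

/-- Euclidean inner product. -/
noncomputable def rdot {ι : Type*} [Fintype ι] (a b : ι → ℝ) : ℝ := ∑ i, a i * b i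

/-- Feasibility of the inequality-form primal LP `Ax ≥ b, x ≥ 0`. -/
def PrimalFeasibleIneq {ι κ : Type*} [Fintype ι] [Fintype κ]
    (A : Matrix ι κ ℝ) (b : ι → ℝ) : Prop :=
  ∃ x : κ → ℝ, (∀ j, 0 ≤ x j) ∧ ∀ i, b i ≤ A.mulVec x i

/-- Feasibility of the dual `Aᵀy ≤ c, y ≥ 0` of an inequality-form primal LP. -/
def DualFeasibleIneq {ι κ : Type*} [Fintype ι] [Fintype κ]
    (A : Matrix ι κ ℝ) (c : κ → ℝ) : Prop :=
  ∃ y : ι → ℝ, (∀ i, 0 ≤ y i) ∧ ∀ j, Aᵀ.mulVec y j ≤ c j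

/-- Norm of the data `d = (A, b, c)`: `max(‖A‖_F, ‖b‖₂, ‖c‖₂)`. -/
noncomputable def dnorm {ι κ : Type*} [Fintype ι] [Fintype κ]
    (A : Matrix ι κ ℝ) (b : ι → ℝ) (c : κ → ℝ) : ℝ :=
  max (frobNorm A) (max (l2norm b) (l2norm c))

/-- Distance of the data to primal infeasibility (inequality form). -/
noncomputable def distPriIneq {ι κ : Type*} [Fintype ι] [Fintype κ]
    (A : Matrix ι κ ℝ) (b : ι → ℝ) (c : κ → ℝ) : ℝ :=
  sInf { r : ℝ | ∃ (dA : Matrix ι κ ℝ) (db : ι → ℝ) (dc : κ → ℝ),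
    ¬ PrimalFeasibleIneq (A + dA) (b + db) ∧ r = dnorm dA db dc }

/-- Distance of the data to dual infeasibility (inequality form). -/
noncomputable def distDualIneq {ι κ : Type*} [Fintype ι] [Fintype κ]
    (A : Matrix ι κ ℝ) (b : ι → ℝ) (c : κ → ℝ) : ℝ :=
  sInf { r : ℝ | ∃ (dA : Matrix ι κ ℝ) (db : ι → ℝ) (dc : κ → ℝ),
    ¬ DualFeasibleIneq (A + dA) (c + dc) ∧ r = dnorm dA db dc }

/-- Renegar primal condition number `δ_P` (inequality form). -/
noncomputable def deltaPIneq {ι κ : Type*} [Fintype ι] [Fintype κ]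
    (A : Matrix ι κ ℝ) (b : ι → ℝ) (c : κ → ℝ) : ℝ := distPriIneq A b c / dnorm A b c

/-- Renegar dual condition number `δ_D` (inequality form). -/
noncomputable def deltaDIneq {ι κ : Type*} [Fintype ι] [Fintype κ]
    (A : Matrix ι κ ℝ) (b : ι → ℝ) (c : κ → ℝ) : ℝ := distDualIneq A b c / dnorm A b c

/-- The full constraint matrix `[A; −I]` of a covering program with box constraints
`x ≤ 1`, encoded in inequality form. -/
noncomputable def coverMat {m n : ℕ} (A : Matrix (Fin m) (Fin n) ℝ) :
    Matrix (Fin m ⊕ Fin n) (Fin n) ℝ :=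
  Matrix.of (Sum.elim (fun j w => A j w) (fun v w => if w = v then (-1 : ℝ) else 0))

/-- The full right-hand side `[b; −1]` of a covering program with box constraints. -/
noncomputable def coverRhs {m : ℕ} (b : Fin m → ℝ) (n : ℕ) : Fin m ⊕ Fin n → ℝ :=
  Sum.elim b (fun _ => (-1 : ℝ))

/-!
The slack point `x_S` satisfies every row of `[A; −I] x ≥ [b; −1]` with margin `s`, and
`‖x_S‖₂ ≤ √n` since `x_S ∈ [0,1]ⁿ`. By Cauchy–Schwarz, changing a row by at most `s/(2√n)` in
norm moves its value at `x_S` by at most `s/2`, and changing the right-hand side by at most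
`s/2` uses up the rest of the margin, so `x_S` stays feasible. Hence every perturbation that
makes the system infeasible has data norm at least `s/(2√n)`, which bounds the distance to
primal infeasibility; dividing by `‖d‖` bounds `δ_P`.
-/

section Norms

variable {ι κ : Type*} [Fintype ι] [Fintype κ]

lemma l2norm_nonneg (x : ι → ℝ) : 0 ≤ l2norm x :=
  Real.sqrt_nonneg _

lemma frobNorm_nonneg (M : Matrix ι κ ℝ) : 0 ≤ frobNorm M :=
  Real.sqrt_nonneg _

lemma abs_rdot_le_l2norm_mul (a x : ι → ℝ) : |rdot a x| ≤ l2norm a * l2norm x := by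
  rw [rdot, l2norm, l2norm, ← Real.sqrt_mul (by positivity), ← Real.sqrt_sq_eq_abs]
  exact Real.sqrt_le_sqrt (Finset.sum_mul_sq_le_sq_mul_sq _ _ _)

lemma abs_le_l2norm (x : ι → ℝ) (i : ι) : |x i| ≤ l2norm x := by
  rw [l2norm, ← Real.sqrt_sq_eq_abs]
  exact Real.sqrt_le_sqrt <|
    Finset.single_le_sum (f := fun j => x j ^ 2) (fun j _ => sq_nonneg _) (Finset.mem_univ i)

lemma l2norm_le_sqrt_card {x : ι → ℝ} (hx : ∀ i, |x i| ≤ 1) :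
    l2norm x ≤ Real.sqrt (Fintype.card ι) := by
  refine Real.sqrt_le_sqrt ?_
  calc ∑ i, x i ^ 2 ≤ ∑ _i : ι, (1 : ℝ) :=
        Finset.sum_le_sum fun i _ => (sq_le_one_iff_abs_le_one _).mpr (hx i)
    _ = Fintype.card ι := by simp

lemma l2norm_row_le_frobNorm (M : Matrix ι κ ℝ) (i : ι) : l2norm (M i) ≤ frobNorm M :=
  Real.sqrt_le_sqrt <| Finset.single_le_sum (f := fun r => ∑ w, M r w ^ 2)
    (fun r _ => Finset.sum_nonneg fun w _ => sq_nonneg _) (Finset.mem_univ i)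

lemma dnorm_nonneg (M : Matrix ι κ ℝ) (β : ι → ℝ) (γ : κ → ℝ) : 0 ≤ dnorm M β γ :=
  (frobNorm_nonneg M).trans (le_max_left _ _)

lemma l2norm_row_le_dnorm (M : Matrix ι κ ℝ) (β : ι → ℝ) (γ : κ → ℝ) (i : ι) :
    l2norm (M i) ≤ dnorm M β γ :=
  (l2norm_row_le_frobNorm M i).trans (le_max_left _ _)

lemma abs_le_dnorm (M : Matrix ι κ ℝ) (β : ι → ℝ) (γ : κ → ℝ) (i : ι) :
    |β i| ≤ dnorm M β γ :=
  (abs_le_l2norm β i).trans ((le_max_left _ _).trans (le_max_right _ _))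

end Norms

lemma add_mulVec_apply {ι κ : Type*} [Fintype κ] (M dM : Matrix ι κ ℝ) (x : κ → ℝ)
    (r : ι) :
    (M + dM).mulVec x r = M.mulVec x r + rdot (dM r) x := by
  simp [Matrix.mulVec, dotProduct, rdot, add_mul, Finset.sum_add_distrib]

section Feasibility

variable {ι κ : Type*} [Fintype ι] [Fintype κ]

lemma PrimalFeasibleIneq.of_slack {M dM : Matrix ι κ ℝ} {β dβ : ι → ℝ} {x : κ → ℝ} {σ : ℝ}
    (hx : ∀ j, 0 ≤ x j) (hslack : ∀ r, β r + σ ≤ M.mulVec x r)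
    (hsmall : ∀ r, l2norm (dM r) * l2norm x + |dβ r| ≤ σ) :
    PrimalFeasibleIneq (M + dM) (β + dβ) := by
  refine ⟨x, hx, fun r => ?_⟩
  have hrow := (abs_le.mp (abs_rdot_le_l2norm_mul (dM r) x)).1
  have hrhs := le_abs_self (dβ r)
  rw [add_mulVec_apply, Pi.add_apply]
  linarith [hslack r, hsmall r]

lemma PrimalFeasibleIneq.exists_row_large_of_not {M dM : Matrix ι κ ℝ} {β dβ : ι → ℝ}
    {x : κ → ℝ} {σ R : ℝ} (hR : 0 < R) (hx : ∀ j, 0 ≤ x j) (hxR : l2norm x ≤ R)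
    (hslack : ∀ r, β r + σ ≤ M.mulVec x r) (hinf : ¬ PrimalFeasibleIneq (M + dM) (β + dβ)) :
    ∃ r, σ * R⁻¹ / 2 < l2norm (dM r) ∨ σ / 2 < |dβ r| := by
  by_contra! hsmall
  refine hinf (of_slack hx hslack fun r => ?_)
  have hprod : l2norm (dM r) * l2norm x ≤ σ / 2 :=
    calc l2norm (dM r) * l2norm x ≤ σ * R⁻¹ / 2 * R :=
          mul_le_mul (hsmall r).1 hxR (l2norm_nonneg _) ((l2norm_nonneg _).trans (hsmall r).1)
      _ = σ / 2 := by field_simp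
  linarith [(hsmall r).2]

/-- Subtracting the whole data and adding `1` to every right-hand side leaves `0 ≥ 1`. -/
lemma exists_not_primalFeasibleIneq [Nonempty ι] (M : Matrix ι κ ℝ) (β : ι → ℝ) :
    ∃ dM dβ, ¬ PrimalFeasibleIneq (M + dM) (β + dβ) := by
  refine ⟨-M, 1 - β, fun ⟨x, _, hx⟩ => ?_⟩
  have h := hx (Classical.arbitrary ι)
  norm_num at h

lemma le_distPriIneq [Nonempty ι] {M : Matrix ι κ ℝ} {β : ι → ℝ} {γ : κ → ℝ} {t : ℝ}
    (h : ∀ dM dβ dγ, ¬ PrimalFeasibleIneq (M + dM) (β + dβ) → t ≤ dnorm dM dβ dγ) :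
    t ≤ distPriIneq M β γ := by
  obtain ⟨dM, dβ, hinf⟩ := exists_not_primalFeasibleIneq M β
  refine le_csInf ⟨_, dM, dβ, 0, hinf, rfl⟩ ?_
  rintro _ ⟨dM, dβ, dγ, hinf, rfl⟩
  exact h dM dβ dγ hinf

end Feasibility

section Covering

variable {m n : ℕ}

lemma coverMat_mulVec_inl (A : Matrix (Fin m) (Fin n) ℝ) (x : Fin n → ℝ) (j : Fin m) :
    (coverMat A).mulVec x (Sum.inl j) = rdot (A j) x := by
  simp [coverMat, Matrix.mulVec, dotProduct, rdot]

lemma coverMat_mulVec_inr (A : Matrix (Fin m) (Fin n) ℝ) (x : Fin n → ℝ) (v : Fin n) :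
    (coverMat A).mulVec x (Sum.inr v) = -x v := by
  simp [coverMat, Matrix.mulVec, dotProduct]

lemma coverRhs_add_le_coverMat_mulVec {A : Matrix (Fin m) (Fin n) ℝ} {b : Fin m → ℝ}
    {x : Fin n → ℝ} {s : ℝ} (hbox : ∀ i, s ≤ 1 - x i) (hcov : ∀ j, s ≤ rdot (A j) x - b j) :
    ∀ r, coverRhs b n r + s ≤ (coverMat A).mulVec x r
  | .inl j => show b j + s ≤ _ by rw [coverMat_mulVec_inl]; linarith [hcov j]
  | .inr v => show -1 + s ≤ _ by rw [coverMat_mulVec_inr]; linarith [hbox v]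

end Covering

theorem covering_primal_distance_to_infeasibility_general
    (m n : ℕ) (hn : 0 < n)
    (A : Matrix (Fin m) (Fin n) ℝ) (b : Fin m → ℝ) (c : Fin n → ℝ)
    -- the slack measure s = s(A,b,c) > 0, attained at a feasible point x_S
    (s : ℝ) (hspos : 0 < s)
    (xS : Fin n → ℝ)
    (hxS_box : ∀ i, 0 ≤ xS i ∧ xS i ≤ 1)
    (hs : s = min (⨅ i : Fin n, (1 - xS i)) (⨅ j : Fin m, (rdot (A j) xS - b j))) :
    -- any perturbation making the (fully perturbed) covering system infeasible is
    -- large in some row, and consequently δ_P ≥ ‖d‖⁻¹ n^{-1/2} s / 2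
    (∀ (dM : Matrix (Fin m ⊕ Fin n) (Fin n) ℝ) (dβ : Fin m ⊕ Fin n → ℝ),
      ¬ PrimalFeasibleIneq (coverMat A + dM) (coverRhs b n + dβ) →
        ∃ r : Fin m ⊕ Fin n,
          s * (Real.sqrt n)⁻¹ / 2 < l2norm (dM r) ∨ s / 2 < |dβ r|) ∧
    (dnorm (coverMat A) (coverRhs b n) c)⁻¹ * (Real.sqrt n)⁻¹ * s / 2 ≤
      deltaPIneq (coverMat A) (coverRhs b n) c := by
  have hslack := coverRhs_add_le_coverMat_mulVec (A := A) (b := b) (x := xS) (s := s)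
    (fun i => hs ▸ (min_le_left _ _).trans (ciInf_le (Finite.bddBelow_range _) i))
    (fun j => hs ▸ (min_le_right _ _).trans (ciInf_le (Finite.bddBelow_range _) j))
  have hxS_norm : l2norm xS ≤ Real.sqrt n := by
    simpa using l2norm_le_sqrt_card fun i =>
      abs_le.mpr ⟨by linarith [(hxS_box i).1], (hxS_box i).2⟩
  have hsqrt_pos : 0 < Real.sqrt n := Real.sqrt_pos.mpr (by exact_mod_cast hn)
  have hrow_bound : s * (Real.sqrt n)⁻¹ / 2 ≤ s / 2 := by
    have := inv_le_one_of_one_le₀ (Real.one_le_sqrt.mpr (Nat.one_le_cast.mpr hn))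
    nlinarith
  have hlarge (dM : Matrix (Fin m ⊕ Fin n) (Fin n) ℝ) (dβ : Fin m ⊕ Fin n → ℝ) :=
    PrimalFeasibleIneq.exists_row_large_of_not (dM := dM) (dβ := dβ) hsqrt_pos
      (fun i => (hxS_box i).1) hxS_norm hslack
  refine ⟨hlarge, ?_⟩
  have : Nonempty (Fin m ⊕ Fin n) := ⟨.inr ⟨0, hn⟩⟩
  have hdist : s * (Real.sqrt n)⁻¹ / 2 ≤ distPriIneq (coverMat A) (coverRhs b n) c :=
    le_distPriIneq fun dM dβ dγ hinf => by
      obtain ⟨r, hr | hr⟩ := hlarge dM dβ hinf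
      · linarith [l2norm_row_le_dnorm dM dβ dγ r]
      · linarith [abs_le_dnorm dM dβ dγ r]
  calc (dnorm (coverMat A) (coverRhs b n) c)⁻¹ * (Real.sqrt n)⁻¹ * s / 2
      = s * (Real.sqrt n)⁻¹ / 2 / dnorm (coverMat A) (coverRhs b n) c := by ring
    _ ≤ deltaPIneq (coverMat A) (coverRhs b n) c :=
      div_le_div_of_nonneg_right hdist (dnorm_nonneg _ _ _)

/-- primal distance to infeasibility of a covering program in terms of
its slack measure `s(A,b,c)`. -/
theorem covering_primal_distance_to_infeasibility
    (m n : ℕ) (hm : 0 < m) (hn : 0 < n)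
    (A : Matrix (Fin m) (Fin n) ℝ) (b : Fin m → ℝ) (c : Fin n → ℝ)
    (hAnn : ∀ j i, 0 ≤ A j i) (hbnn : ∀ j, 0 ≤ b j) (hcnn : ∀ i, 0 ≤ c i)
    -- the slack measure s = s(A,b,c) > 0, attained at a feasible point x_S
    (s : ℝ) (hspos : 0 < s)
    (xS : Fin n → ℝ)
    (hxS_box : ∀ i, 0 ≤ xS i ∧ xS i ≤ 1)
    (hxS_cov : ∀ j, b j ≤ rdot (A j) xS)
    (hs : s = min (⨅ i : Fin n, (1 - xS i)) (⨅ j : Fin m, (rdot (A j) xS - b j)))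
    (hsmax : ∀ x : Fin n → ℝ, (∀ i, 0 ≤ x i ∧ x i ≤ 1) → (∀ j, b j ≤ rdot (A j) x) →
      min (⨅ i : Fin n, (1 - x i)) (⨅ j : Fin m, (rdot (A j) x - b j)) ≤ s) :
    -- any perturbation making the (fully perturbed) covering system infeasible is
    -- large in some row, and consequently δ_P ≥ ‖d‖⁻¹ n^{-1/2} s / 2
    (∀ (dM : Matrix (Fin m ⊕ Fin n) (Fin n) ℝ) (dβ : Fin m ⊕ Fin n → ℝ),
      ¬ PrimalFeasibleIneq (coverMat A + dM) (coverRhs b n + dβ) →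
        ∃ r : Fin m ⊕ Fin n,
          s * (Real.sqrt n)⁻¹ / 2 < l2norm (dM r) ∨ s / 2 < |dβ r|) ∧
    (dnorm (coverMat A) (coverRhs b n) c)⁻¹ * (Real.sqrt n)⁻¹ * s / 2 ≤
      deltaPIneq (coverMat A) (coverRhs b n) c :=
  covering_primal_distance_to_infeasibility_general m n hn A b c s hspos xS hxS_box hs
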